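/- arXiv:2112.09590 — 2 statements merged into one kernel-verified Lean document; each statement's English description precedes it below -/
import Mathlib

section
/- For every n ≥ 1, all i, j ∈ {1,…,n} and every integer k ≥ 0, the bimodule S^{(k)}_{i|j}, regarded as a left Λ_n-module, is isomorphic to Λ_n ε_i ⊕ Λ_n ε_{i+1} ⊕ ⋯ ⊕ Λ_n ε_{i+k} (indices modulo n); in particular, S^{(k)}_{i|j} is projective as a left Λ_n-module. -/
/-!
For an idempotent `e`, the module `A e` is a direct summand of `A`, hence projective. In `Λ_n`
every `x ε_c` equals `x_{ε_c} ε_c + x_{α_c} α_c` (coefficients of `x` in the standard basis), so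
`Λ_n ε_c` is spanned over `𝕜` by `ε_c` and `α_c`. The `Λ_n`-linear map
`⨁_m Λ_n ε_{i+m} → S^{(k)}_{i|j}` acting on the `m`-th summand by `x ↦ x • s_{i+m|j+m}` sends
`ε_{i+m} ↦ s_{i+m|j+m}` and `α_{i+m} ↦ s_{i+m+1|j+m}`; the `𝕜`-linear map defined on the basis of
`S^{(k)}_{i|j}` by the reverse assignment is therefore its inverse.
-/

open scoped DirectSum

def rmul (A : Type) [Ring A] (a : A) : A →ₗ[A] A where
  toFun x := x * a
  map_add' x y := add_mul x y a
  map_smul' b x := by simp [smul_eq_mul, mul_assoc]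

@[simp]
theorem rmul_apply {A : Type} [Ring A] (a x : A) : rmul A a x = x * a := rfl

section Idempotent

variable {A : Type} [Ring A] {e : A}

theorem mem_range_rmul_of_mul_eq {x : A} (hx : x * e = x) : x ∈ LinearMap.range (rmul A e) :=
  ⟨x, hx⟩

theorem projective_range_rmul (he : IsIdempotentElem e) :
    Module.Projective A (LinearMap.range (rmul A e)) :=
  Module.Projective.of_split (LinearMap.range (rmul A e)).subtype (rmul A e).rangeRestrict <| by
    ext ⟨_, x, rfl⟩
    simp [mul_assoc, he.eq]

end Idempotent

section DirectSumRange

variable {𝕜 A S ι : Type} [CommRing 𝕜] [Ring A] [Algebra 𝕜 A] [AddCommGroup S] [Module 𝕜 S]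
  [Module A S] [IsScalarTower 𝕜 A S] [DecidableEq ι]
  {e a : ι → A} {bS : Module.Basis (ι ⊕ ι) 𝕜 S}

local notation "P" i => LinearMap.range (rmul A (e i))

theorem nonempty_linearEquiv_directSum_range_rmul
    (he : ∀ i, IsIdempotentElem (e i)) (hae : ∀ i, a i * e i = a i)
    (hspan : ∀ i x, x * e i ∈ Submodule.span 𝕜 {e i, a i})
    (heS : ∀ i, e i • bS (Sum.inl i) = bS (Sum.inl i))
    (haS : ∀ i, a i • bS (Sum.inl i) = bS (Sum.inr i)) :
    Nonempty (S ≃ₗ[A] ⨁ i, P i) := by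
  let ε i : P i := ⟨e i, mem_range_rmul_of_mul_eq (he i).eq⟩
  let α i : P i := ⟨a i, mem_range_rmul_of_mul_eq (hae i)⟩
  let g : (⨁ i, P i) →ₗ[A] S :=
    DirectSum.toModule A ι S fun i =>
      (LinearMap.toSpanSingleton A S (bS (Sum.inl i))).comp (P i).subtype
  have g_lof i (v : P i) : g (DirectSum.lof 𝕜 ι (fun i => P i) i v) = (v : A) • bS (Sum.inl i) :=
    DirectSum.toModule_lof (M := fun i => P i) A i v
  let h : S →ₗ[𝕜] ⨁ i, P i :=
    bS.constr 𝕜 <|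
      Sum.elim (fun i => DirectSum.lof 𝕜 ι _ i (ε i)) (fun i => DirectSum.lof 𝕜 ι _ i (α i))
  have g_h : (g.restrictScalars 𝕜).comp h = LinearMap.id := bS.ext <| by
    rintro (i | i)
    · simpa [h, g_lof] using heS i
    · simpa [h, g_lof] using haS i
  have h_g : h.comp (g.restrictScalars 𝕜) = LinearMap.id := by
    refine DirectSum.linearMap_ext 𝕜 fun i => LinearMap.ext fun v => ?_
    obtain ⟨_, x, rfl⟩ := v
    obtain ⟨r, s, hv⟩ := Submodule.mem_span_pair.1 (hspan i x)
    rw [show (⟨rmul A (e i) x, x, rfl⟩ : P i) = r • ε i + s • α i from Subtype.ext hv.symm]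
    simp only [LinearMap.comp_apply, LinearMap.restrictScalars_apply, LinearMap.id_apply, map_add,
      map_smul, g_lof]
    simp only [ε, α, heS, haS, h, Module.Basis.constr_basis, Sum.elim_inl, Sum.elim_inr]
  let E : (⨁ i, P i) ≃ₗ[A] S :=
    { g with invFun := h, left_inv := fun x => congr($h_g x), right_inv := fun x => congr($g_h x) }
  exact ⟨E.symm⟩

end DirectSumRange

section CyclicNakayama

variable {𝕜 : Type} [CommRing 𝕜] {n : ℕ} [NeZero n] {A : Type} [Ring A] [Algebra 𝕜 A]
  {eps al : ZMod n → A} (bA : Module.Basis (ZMod n ⊕ ZMod n) 𝕜 A)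

theorem mul_eps_eq (hbAe : ∀ a, bA (Sum.inl a) = eps a) (hbAa : ∀ a, bA (Sum.inr a) = al a)
    (hee : ∀ a b, eps a * eps b = if a = b then eps a else 0)
    (hae : ∀ a b, al a * eps b = if b = a then al a else 0) (x : A) (c : ZMod n) :
    x * eps c = bA.repr x (Sum.inl c) • eps c + bA.repr x (Sum.inr c) • al c := by
  conv_lhs => rw [← bA.sum_repr x]
  rw [Finset.sum_mul, Fintype.sum_sum_type]
  simp only [smul_mul_assoc, hbAe, hbAa, hee, hae, smul_ite, smul_zero, Finset.sum_ite_eq,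
    Finset.sum_ite_eq', Finset.mem_univ, if_true]

end CyclicNakayama

/-- `Λ_n` is modelled by any `𝕜`-algebra `A` with basis `ε_a = bA (Sum.inl a)`,
`α_a = bA (Sum.inr a)` (`a : ZMod n`) and the structure constants of the radical square zero cyclic
Nakayama algebra; `S^{(k)}_{i|j}` by any bimodule with basis `s_{i+m|j+m} = bS (Sum.inl m)`,
`s_{i+m+1|j+m} = bS (Sum.inr m)`; and `Λ_n ε` by `LinearMap.range (rmul A ε)`. -/
theorem stmt_1 {𝕜 : Type} [Field 𝕜] (n : ℕ) [NeZero n]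
    (A : Type) [Ring A] [Algebra 𝕜 A]
    (eps al : ZMod n → A)
    (bA : Module.Basis (ZMod n ⊕ ZMod n) 𝕜 A)
    (hbAe : ∀ a, bA (Sum.inl a) = eps a)
    (hbAa : ∀ a, bA (Sum.inr a) = al a)
    (hee : ∀ a b, eps a * eps b = if a = b then eps a else 0)
    (hae : ∀ a b, al a * eps b = if b = a then al a else 0)
    (i : ZMod n) (k : ℕ)
    (S : Type) [AddCommGroup S] [Module 𝕜 S] [Module A S]
    [IsScalarTower 𝕜 A S]
    (bS : Module.Basis (Fin (k + 1) ⊕ Fin (k + 1)) 𝕜 S)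
    (hSe : ∀ (a : ZMod n) (x : Fin (k + 1) ⊕ Fin (k + 1)),
      eps a • bS x =
        if a = Sum.elim (fun m : Fin (k + 1) => i + (m : ℕ)) (fun m : Fin (k + 1) => i + (m : ℕ) + 1) x then bS x else 0)
    (hSa : ∀ (a : ZMod n) (m : Fin (k + 1)),
      al a • bS (Sum.inl m) = if a = i + (m : ℕ) then bS (Sum.inr m) else 0) :
    Nonempty (S ≃ₗ[A] ⨁ m : Fin (k + 1), ↥(LinearMap.range (rmul A (eps (i + (m : ℕ)))))) ∧
      Module.Projective A S := by
  have eps_idem (c : ZMod n) : IsIdempotentElem (eps c) := by simp [IsIdempotentElem, hee]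
  obtain ⟨E⟩ := nonempty_linearEquiv_directSum_range_rmul (bS := bS)
    (e := fun m : Fin (k + 1) => eps (i + (m : ℕ))) (a := fun m => al (i + (m : ℕ)))
    (fun m => eps_idem _) (fun m => by simp [hae])
    (fun m x => Submodule.mem_span_pair.2 ⟨_, _, (mul_eps_eq bA hbAe hbAa hee hae x _).symm⟩)
    (fun m => by simpa using hSe (i + (m : ℕ)) (Sum.inl m))
    (fun m => by simpa using hSa (i + (m : ℕ)) m)
  have := fun m : Fin (k + 1) => projective_range_rmul (eps_idem (i + (m : ℕ)))
  exact ⟨⟨E⟩, .of_equiv E.symm⟩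
end

section
/- Let d ≥ 1, let c > 0 be a real number, and let X be a d × d real matrix all of whose entries are strictly positive, satisfying X² = cX. Then X has rank 1 and trace(X) = c. -/
open Matrix

/-- A strictly positive real `d × d` matrix `X` with `X² = cX` (`c > 0`)
has rank 1 and trace `c`. -/
theorem stmt_6 (d : ℕ) (hd : 1 ≤ d) (c : ℝ) (hc : 0 < c)
    (X : Matrix (Fin d) (Fin d) ℝ)
    (hpos : ∀ i j, 0 < X i j)
    (hX : X * X = c • X) :
    X.rank = 1 ∧ X.trace = c := by
  have hd0 : (0 : ℕ) < d := hd
  have z : Fin d := ⟨0, hd0⟩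
  -- entrywise form of hX
  have hent : ∀ i j, ∑ k, X i k * X k j = c * X i j := by
    intro i j
    have := congrFun (congrFun hX i) j
    simpa [Matrix.mul_apply, Matrix.smul_apply] using this
  -- each column is proportional to column z
  have hcol : ∀ j, ∃ s : ℝ, 0 < s ∧ ∀ i, X i j = s * X i z := by
    intro j
    -- minimize ratio
    obtain ⟨i0, -, hi0⟩ := Finset.exists_min_image Finset.univ
      (fun i => X i j / X i z) ⟨z, Finset.mem_univ z⟩
    set t := X i0 j / X i0 z with ht
    have htpos : 0 < t := div_pos (hpos i0 j) (hpos i0 z)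
    have hw : ∀ k, 0 ≤ X k j - t * X k z := by
      intro k
      have h1 : t ≤ X k j / X k z := hi0 k (Finset.mem_univ k)
      have h2 : t * X k z ≤ X k j := by
        rw [← le_div_iff₀ (hpos k z)]; exact h1
      linarith
    have hw0 : X i0 j - t * X i0 z = 0 := by
      rw [ht, div_mul_cancel₀ _ (hpos i0 z).ne']
      ring
    -- eigenvector equation for w
    have heig : ∑ k, X i0 k * (X k j - t * X k z) = 0 := by
      have h1 := hent i0 j
      have h2 := hent i0 z
      have h3 : X i0 j - t * X i0 z = 0 := hw0
      have : ∑ k, X i0 k * (X k j - t * X k z)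
          = (∑ k, X i0 k * X k j) - t * ∑ k, X i0 k * X k z := by
        rw [Finset.mul_sum, ← Finset.sum_sub_distrib]
        congr 1; ext k; ring
      rw [this, h1, h2]
      nlinarith
    have hzero : ∀ k ∈ Finset.univ, X i0 k * (X k j - t * X k z) = 0 := by
      apply (Finset.sum_eq_zero_iff_of_nonneg ?_).mp heig
      · intro k _
        exact mul_nonneg (hpos i0 k).le (hw k)
    refine ⟨t, htpos, fun k => ?_⟩
    have := hzero k (Finset.mem_univ k)
    have hXk := (hpos i0 k).ne'
    have : X k j - t * X k z = 0 := by
      rcases mul_eq_zero.mp this with h | h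
      · exact absurd h hXk
      · exact h
    linarith
  choose s hs hsX using hcol
  -- sum of s k * X k z equals c
  have hsum : ∑ k, s k * X k z = c := by
    have h := hent z z
    have : ∑ k, X z k * X k z = X z z * ∑ k, s k * X k z := by
      rw [Finset.mul_sum]
      congr 1; ext k
      rw [hsX k z]; ring
    rw [this] at h
    have hne := (hpos z z).ne'
    have : X z z * ∑ k, s k * X k z = X z z * c := by rw [h]; ring
    exact mul_left_cancel₀ hne this
  constructor
  · -- rank
    have hle : X.rank ≤ 1 := by
      have hfac : X = (Matrix.of fun i (_ : Fin 1) => X i z) *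
          (Matrix.of fun (_ : Fin 1) j => s j) := by
        ext i j
        simp only [Matrix.mul_apply, Matrix.of_apply, Fin.sum_univ_one]
        rw [hsX j i]; ring
      calc X.rank ≤ ((Matrix.of fun (_ : Fin 1) j => s j) :
              Matrix (Fin 1) (Fin d) ℝ).rank := by
            rw [hfac]; exact Matrix.rank_mul_le_right _ _
        _ ≤ Fintype.card (Fin 1) := Matrix.rank_le_card_height _
        _ = 1 := by simp
    have hge : 1 ≤ X.rank := by
      rw [Nat.one_le_iff_ne_zero]
      intro h0
      have : X.mulVecLin = 0 := by
        rw [← LinearMap.range_eq_bot, ← Submodule.finrank_eq_zero]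
        exact h0
      have h1 : X *ᵥ (fun _ => 1) = 0 := by
        have := LinearMap.congr_fun this (fun _ => 1)
        simpa [Matrix.mulVecLin] using this
      have h2 := congrFun h1 z
      have h3 : ∑ k, X z k = 0 := by
        simpa [Matrix.mulVec, dotProduct] using h2
      have hp : 0 < ∑ k, X z k :=
        Finset.sum_pos (fun k _ => hpos z k) ⟨z, Finset.mem_univ z⟩
      linarith
    omega
  · -- trace
    have : X.trace = ∑ i, s i * X i z := by
      unfold Matrix.trace
      congr 1; ext i
      simpa [Matrix.diag] using hsX i i
    rw [this, hsum]
end
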